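/- Let k ≥ 2, σ_i = i(k−i)/2, and C₀ > 0. Let ξ be a maximal solution of system (P) with initial data at τ = 0 satisfying ∑_{i=1}^k ξ_i(0) = 0 and |ξ_i(0)| ≤ C₀ for all i = 1,…,k. Then ξ is defined on all of [0,∞), and there exists a constant C₁ > 0, depending only on k and C₀ (not on the particular solution), such that for all τ ≥ 0, max_{1≤i≤k} |ξ_i(τ)| ≤ C₁·e^{−τ}. -/

import Mathlib

/-!
Write `dⱼ = ξⱼ₊₁ - ξⱼ`, `uⱼ = e^{-dⱼ} - 1` and `φ(x) = e^{-x} - 1 + x`. The energy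
`E = ∑ σⱼ φ(dⱼ)` satisfies `E' = -⟨A, ΔA⟩`, where `Aⱼ = σⱼ uⱼ` and
`(ΔA)ⱼ = 2Aⱼ - Aⱼ₋₁ - Aⱼ₊₁`, and the relation `σⱼ + σⱼ₊₂ = 2σⱼ₊₁ - 1` gives the spectral gap
`⟨A, ΔA⟩ ≥ ∑ σⱼ uⱼ²`. Since `φ(x) ≤ ½ e^{2|x|} (e^{-x} - 1)²` and `|dⱼ| ≤ 1 + 2E(0)`, the energy
first decays exponentially at a slow rate, hence so do the `dⱼ`; then
`2(1 - 2|x|) φ(x) ≤ (e^{-x} - 1)²` gives `E' ≤ -(2 - O(e^{-γτ})) E`, so `E = O(e^{-2τ})`.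
As `φ(x) ≳ x²` on bounded sets, `dⱼ = O(e^{-τ})`, and the conserved sum `∑ ξᵢ = 0` turns this
into `ξᵢ = O(e^{-τ})`, with constants depending only on `k` and a bound for `E(0)`.

For global existence, solve the system with `e^{-x}` replaced by `e^{-clamp x}`, which is bounded
and globally Lipschitz: `∑ ξᵢ²` does not increase along solutions, which keeps every `|dⱼ|` below
the clamping level, where the two systems agree.
-/

/-- `σᵢ = i(k-i)/2` (so that `σ₀ = σ_k = 0`). -/
noncomputable def sig (k i : ℕ) : ℝ := (i : ℝ) * ((k : ℝ) - (i : ℝ)) / 2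

/-- System (P): for `i = 1,…,k`,
`ξᵢ' = σᵢ₋₁(e^{-(ξᵢ-ξᵢ₋₁)} - 1) - σᵢ(e^{-(ξᵢ₊₁-ξᵢ)} - 1)` on the set `S`
(the conventions for `i = 1` and `i = k` are automatic since `σ₀ = σ_k = 0`). -/
def SolvesP (k : ℕ) (ξ : ℕ → ℝ → ℝ) (S : Set ℝ) : Prop :=
  ∀ i, 1 ≤ i → i ≤ k → ∀ τ ∈ S, HasDerivAt (ξ i)
    (sig k (i - 1) * (Real.exp (-(ξ i τ - ξ (i - 1) τ)) - 1)
      - sig k i * (Real.exp (-(ξ (i + 1) τ - ξ i τ)) - 1)) τ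

open Real Finset
open scoped NNReal Topology

lemma LipschitzWith.of_forall_eval {α ι : Type*} [PseudoEMetricSpace α] [Fintype ι]
    {f : α → ι → ℝ} {K : ℝ≥0} (h : ∀ i, LipschitzWith K (f · i)) : LipschitzWith K f :=
  fun x y => edist_pi_le_iff.2 fun i => h i x y

lemma antitoneOn_Ici_of_hasDerivAt {f : ℝ → ℝ} {a : ℝ}
    (h : ∀ x ∈ Set.Ici a, ∃ f', HasDerivAt f f' x ∧ f' ≤ 0) : AntitoneOn f (Set.Ici a) := by
  choose! f' hf hf' using h
  refine antitoneOn_of_hasDerivWithinAt_nonpos (f' := f') (convex_Ici a)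
    (fun x hx => (hf x hx).continuousAt.continuousWithinAt) (fun x hx => ?_) (fun x hx => ?_)
  all_goals rw [interior_Ici] at hx
  exacts [(hf x (Set.mem_Ici.2 hx.le)).hasDerivWithinAt, hf' x (Set.mem_Ici.2 hx.le)]

lemma le_of_hasDerivAt_le {f g f' g' : ℝ → ℝ} {b : ℝ} (hb : 0 ≤ b) (h₀ : f 0 ≤ g 0)
    (hf : ∀ x, HasDerivAt f (f' x) x) (hg : ∀ x, HasDerivAt g (g' x) x)
    (h : ∀ x, 0 ≤ x → f' x ≤ g' x) : f b ≤ g b := by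
  have := antitoneOn_Ici_of_hasDerivAt (fun x hx => ⟨_, (hf x).sub (hg x), sub_nonpos.2 (h x hx)⟩)
    (a := 0) Set.self_mem_Ici hb hb
  linarith [Pi.sub_apply f g b, Pi.sub_apply f g 0]

lemma le_mul_exp_sub_of_hasDerivAt {E W w : ℝ → ℝ}
    (hE : ∀ τ ∈ Set.Ici 0, ∃ e, HasDerivAt E e τ ∧ e + w τ * E τ ≤ 0)
    (hW : ∀ τ, HasDerivAt W (w τ) τ) {τ : ℝ} (hτ : 0 ≤ τ) :
    E τ ≤ E 0 * exp (W 0 - W τ) := by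
  have hanti := antitoneOn_Ici_of_hasDerivAt fun σ hσ => by
    obtain ⟨e, he, hle⟩ := hE σ hσ
    exact ⟨_, he.mul (hW σ).exp, by nlinarith [exp_pos (W σ)]⟩
  rw [exp_sub, ← mul_div_assoc, le_div_iff₀ (exp_pos _)]
  exact hanti Set.self_mem_Ici hτ hτ

theorem exists_hasDerivAt_of_lipschitzWith {E : Type*} [NormedAddCommGroup E]
    [NormedSpace ℝ E] [CompleteSpace E] {F : E → E} {K : ℝ≥0} {L : ℝ} (hF : LipschitzWith K F)
    (hL : ∀ x, ‖F x‖ ≤ L) (x₀ : E) : ∃ g : ℝ → E, g 0 = x₀ ∧ ∀ t, HasDerivAt g (F (g t)) t := by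
  have hloc (n : ℕ) : ∃ α : ℝ → E, α 0 = x₀ ∧
      ∀ t ∈ Set.Ioo (-(n + 1 : ℝ)) (n + 1), HasDerivAt α (F (α t)) t := by
    have hpl : IsPicardLindelof (fun _ => F) (tmin := -(n + 1 : ℝ)) (tmax := n + 1)
        ⟨0, neg_nonpos.2 (by positivity), by positivity⟩ x₀
        (L.toNNReal * (n + 1 : ℝ≥0)) 0 L.toNNReal K :=
      IsPicardLindelof.of_time_independent (fun x _ => (hL x).trans (Real.le_coe_toNNReal L))
        hF.lipschitzOnWith (by simp)
    obtain ⟨α, hα₀, hα⟩ := hpl.exists_eq_forall_mem_Icc_hasDerivWithinAt₀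
    exact ⟨α, hα₀, fun t ht => (hα t (Set.Ioo_subset_Icc_self ht)).hasDerivAt
      (Icc_mem_nhds ht.1 ht.2)⟩
  choose α hα₀ hα using hloc
  have hagree {m n : ℕ} (hmn : m ≤ n) :
      Set.EqOn (α m) (α n) (Set.Ioo (-(m + 1 : ℝ)) (m + 1)) := by
    have hsub : Set.Ioo (-(m + 1 : ℝ)) (m + 1) ⊆ Set.Ioo (-(n + 1 : ℝ)) (n + 1) :=
      Set.Ioo_subset_Ioo (by gcongr) (by gcongr)
    exact ODE_solution_unique_of_mem_Ioo (v := fun _ => F) (s := fun _ => Set.univ)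
      (fun _ _ => hF.lipschitzOnWith) ⟨neg_lt_zero.2 (by positivity), by positivity⟩
      (fun t ht => ⟨hα m t ht, trivial⟩) (fun t ht => ⟨hα n t (hsub ht), trivial⟩)
      ((hα₀ m).trans (hα₀ n).symm)
  have hmem (t : ℝ) : t ∈ Set.Ioo (-(⌈|t|⌉₊ + 1 : ℝ)) (⌈|t|⌉₊ + 1) := by
    have := Nat.le_ceil |t|
    constructor <;> linarith [neg_abs_le t, le_abs_self t]
  set g : ℝ → E := fun t => α ⌈|t|⌉₊ t
  have hg (n : ℕ) : Set.EqOn g (α n) (Set.Ioo (-(n + 1 : ℝ)) (n + 1)) := fun s hs => by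
    rcases le_total ⌈|s|⌉₊ n with h | h
    · exact hagree h (hmem s)
    · exact (hagree h hs).symm
  refine ⟨g, (hg 0 ⟨by norm_num, by norm_num⟩).trans (hα₀ 0), fun t => ?_⟩
  have hnhds : Set.Ioo (-(⌈|t|⌉₊ + 1 : ℝ)) (⌈|t|⌉₊ + 1) ∈ 𝓝 t := Ioo_mem_nhds (hmem t).1 (hmem t).2
  rw [hg _ (hmem t)]
  exact (hα _ t (hmem t)).congr_of_eventuallyEq (Filter.eventuallyEq_of_mem hnhds (hg _))

namespace SystemP

lemma sig_zero (k : ℕ) : sig k 0 = 0 := by simp [sig]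

lemma sig_self (k : ℕ) : sig k k = 0 := by simp [sig]

lemma sig_nonneg {k j : ℕ} (h : j ≤ k) : 0 ≤ sig k j :=
  div_nonneg (mul_nonneg j.cast_nonneg (sub_nonneg.2 (by exact_mod_cast h))) zero_le_two

lemma one_half_le_sig {k j : ℕ} (h : j ∈ Ioo 0 k) : 1 / 2 ≤ sig k j := by
  obtain ⟨h₁, h₂⟩ := mem_Ioo.1 h
  have h₁ : (1 : ℝ) ≤ j := by exact_mod_cast h₁
  have h₂ : (j : ℝ) + 1 ≤ k := by exact_mod_cast h₂
  unfold sig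
  nlinarith

lemma sig_le_sq {k j : ℕ} (h : j ≤ k) : sig k j ≤ (k : ℝ) ^ 2 := by
  have : (j : ℝ) ≤ k := by exact_mod_cast h
  unfold sig
  nlinarith [Nat.cast_nonneg (α := ℝ) j]

lemma sig_add_sig_add_two (k j : ℕ) : sig k j + sig k (j + 2) = 2 * sig k (j + 1) - 1 := by
  simp only [sig]
  push_cast
  ring

lemma sum_Icc_mul_sub_eq (a v : ℕ → ℝ) (n : ℕ) :
    ∑ i ∈ Icc 1 n, v i * (a (i - 1) - a i)
      = ∑ j ∈ range n, a j * (v (j + 1) - v j) + a 0 * v 0 - a n * v n := by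
  induction n with
  | zero => simp
  | succ n ih =>
    rw [sum_Icc_succ_top (by omega), ih, sum_range_succ, Nat.add_sub_cancel]
    ring

lemma sum_Ioo_eq_sum_range {k : ℕ} {f : ℕ → ℝ} (h₀ : f 0 = 0) (hk : f k = 0) :
    ∑ j ∈ Ioo 0 k, f j = ∑ j ∈ range (k + 1), f j := by
  refine sum_subset (fun j hj => ?_) (fun j hj hj' => ?_)
  · simp only [mem_Ioo, mem_range] at hj ⊢; omega
  · simp only [mem_Ioo, mem_range, not_and, not_lt] at hj hj'
    obtain rfl | rfl : j = 0 ∨ j = k := by omega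
    exacts [h₀, hk]

lemma sum_range_laplacian_sub_eq (k n : ℕ) (u : ℕ → ℝ) :
    ∑ j ∈ range (n + 1), (sig k j * u j * (2 * (sig k j * u j) - sig k (j - 1) * u (j - 1)
        - sig k (j + 1) * u (j + 1)) - sig k j * u j ^ 2)
      = ∑ j ∈ range n, sig k j * sig k (j + 1) * (u j - u (j + 1)) ^ 2
        + sig k n * sig k (n + 1) * u n * (u n - u (n + 1)) := by
  induction n with
  | zero => simp [sig_zero]
  | succ n ih =>
    rw [sum_range_succ, ih, sum_range_succ, Nat.add_sub_cancel]
    linear_combination (-(sig k (n + 1) * u (n + 1) ^ 2)) * sig_add_sig_add_two k n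

lemma sum_sig_mul_sq_le (k : ℕ) (u : ℕ → ℝ) :
    ∑ j ∈ Ioo 0 k, sig k j * u j ^ 2
      ≤ ∑ j ∈ Ioo 0 k, sig k j * u j * (2 * (sig k j * u j) - sig k (j - 1) * u (j - 1)
        - sig k (j + 1) * u (j + 1)) := by
  rw [← sub_nonneg, ← sum_sub_distrib, sum_Ioo_eq_sum_range (by simp [sig_zero])
    (by simp [sig_self]), sum_range_laplacian_sub_eq, sig_self, zero_mul, zero_mul, zero_mul,
    add_zero]
  refine sum_nonneg fun j hj => ?_
  rw [mem_range] at hj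
  exact mul_nonneg (mul_nonneg (sig_nonneg hj.le) (sig_nonneg hj)) (sq_nonneg _)

noncomputable def phi (x : ℝ) : ℝ := exp (-x) - 1 + x

lemma hasDerivAt_phi (x : ℝ) : HasDerivAt phi (1 - exp (-x)) x :=
  (((hasDerivAt_neg x).exp.sub_const 1).add (hasDerivAt_id' x)).congr_deriv (by ring)

lemma phi_nonneg (x : ℝ) : 0 ≤ phi x := by
  unfold phi; linarith [add_one_le_exp (-x)]

lemma abs_sub_one_le_phi (x : ℝ) : |x| - 1 ≤ phi x := by
  unfold phi
  rcases le_total 0 x with h | h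
  · rw [abs_of_nonneg h]; linarith [exp_pos (-x)]
  · rw [abs_of_nonpos h]; nlinarith [quadratic_le_exp_of_nonneg (neg_nonneg.2 h)]

lemma phi_le_exp_abs_add_abs (x : ℝ) : phi x ≤ exp |x| + |x| := by
  unfold phi; linarith [exp_le_exp.2 (neg_le_abs x), le_abs_self x]

lemma exp_neg_mul_sq_le_phi {x : ℝ} (hx : 0 ≤ x) : exp (-x) * x ^ 2 / 2 ≤ phi x := by
  refine le_of_hasDerivAt_le (f := fun y => exp (-y) * y ^ 2 / 2)
    (f' := fun y => (exp (-y) * -1 * y ^ 2 + exp (-y) * (2 * y)) / 2) hx (by simp [phi])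
    (fun y => ?_) hasDerivAt_phi (fun y hy => ?_)
  · exact (((hasDerivAt_neg y).exp.mul (hasDerivAt_pow 2 y)).div_const 2).congr_deriv (by simp)
  · have : exp (-y) * (1 + y) ≤ 1 := by
      calc exp (-y) * (1 + y) ≤ exp (-y) * exp y := by gcongr; linarith [add_one_le_exp y]
        _ = 1 := by rw [← exp_add, neg_add_cancel, exp_zero]
    nlinarith [mul_nonneg (exp_pos (-y)).le (sq_nonneg y)]

lemma phi_le_sq_div_two {x : ℝ} (hx : 0 ≤ x) : phi x ≤ x ^ 2 / 2 := by
  refine le_of_hasDerivAt_le hx (by simp [phi]) hasDerivAt_phi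
    (fun y => (hasDerivAt_pow 2 y).div_const 2) (fun y _ => ?_)
  simp only [Nat.cast_ofNat]
  linarith [add_one_le_exp (-y)]

lemma exp_sub_one_sub_le {t : ℝ} (ht : 0 ≤ t) : exp t - 1 - t ≤ (exp t - 1) ^ 2 / 2 := by
  refine le_of_hasDerivAt_le ht (by simp) (fun y => ((hasDerivAt_exp y).sub_const 1).sub
    (hasDerivAt_id y)) (fun y => (((hasDerivAt_exp y).sub_const 1).pow 2).div_const 2)
    (fun y hy => ?_)
  have : 1 ≤ exp y := one_le_exp hy
  simp only [Nat.cast_ofNat]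
  nlinarith

lemma exp_neg_abs_mul_sq_le_phi (x : ℝ) : exp (-|x|) * x ^ 2 / 2 ≤ phi x := by
  rcases le_total 0 x with h | h
  · rw [abs_of_nonneg h]; exact exp_neg_mul_sq_le_phi h
  · have := quadratic_le_exp_of_nonneg (neg_nonneg.2 h)
    have : exp (-|x|) ≤ 1 := exp_le_one_iff.2 (neg_nonpos.2 (abs_nonneg x))
    unfold phi
    nlinarith [sq_nonneg x]

lemma phi_le_exp_mul_sq (x : ℝ) : phi x ≤ exp (2 * |x|) / 2 * (exp (-x) - 1) ^ 2 := by
  rcases le_total 0 x with h | h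
  · have hlow : x * exp (-x) ≤ 1 - exp (-x) := by
      have := add_one_le_exp x
      have hx : exp x * exp (-x) = 1 := by rw [← exp_add, add_neg_cancel, exp_zero]
      nlinarith [exp_pos (-x)]
    have hsq : (x * exp (-x)) ^ 2 ≤ (exp (-x) - 1) ^ 2 := by
      rw [← neg_sub, neg_sq]
      exact pow_le_pow_left₀ (by positivity) hlow 2
    calc phi x ≤ x ^ 2 / 2 := phi_le_sq_div_two h
      _ = exp (2 * |x|) / 2 * (x * exp (-x)) ^ 2 := by
        have : exp (2 * x) * exp (-x) ^ 2 = 1 := by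
          rw [← exp_nat_mul, ← exp_add]; norm_num
        rw [abs_of_nonneg h]
        linear_combination (-(x ^ 2 / 2)) * this
      _ ≤ _ := by gcongr
  · have := exp_sub_one_sub_le (neg_nonneg.2 h)
    have : 1 ≤ exp (2 * |x|) := one_le_exp (by positivity)
    unfold phi
    nlinarith [sq_nonneg (exp (-x) - 1)]

lemma two_mul_exp_neg_two_mul_phi_le {x B : ℝ} (h : |x| ≤ B) :
    2 * exp (-(2 * B)) * phi x ≤ (exp (-x) - 1) ^ 2 := by
  have hB : exp (-(2 * B)) * exp (2 * |x|) ≤ 1 := by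
    rw [← exp_add, exp_le_one_iff]; linarith
  calc 2 * exp (-(2 * B)) * phi x
        ≤ 2 * exp (-(2 * B)) * (exp (2 * |x|) / 2 * (exp (-x) - 1) ^ 2) := by
          gcongr; exact phi_le_exp_mul_sq x
    _ = exp (-(2 * B)) * exp (2 * |x|) * (exp (-x) - 1) ^ 2 := by ring
    _ ≤ 1 * (exp (-x) - 1) ^ 2 := by gcongr
    _ = _ := one_mul _

lemma two_mul_one_sub_two_abs_mul_phi_le (x : ℝ) :
    2 * (1 - 2 * |x|) * phi x ≤ (exp (-x) - 1) ^ 2 := by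
  rcases le_total (1 - 2 * |x|) 0 with h | h
  · nlinarith [phi_nonneg x, sq_nonneg (exp (-x) - 1)]
  · have hexp : (1 - 2 * |x|) * exp (2 * |x|) ≤ 1 := by
      calc (1 - 2 * |x|) * exp (2 * |x|) ≤ exp (-(2 * |x|)) * exp (2 * |x|) := by
            gcongr; linarith [add_one_le_exp (-(2 * |x|))]
        _ = 1 := by rw [← exp_add, neg_add_cancel, exp_zero]
    calc 2 * (1 - 2 * |x|) * phi x
        ≤ 2 * (1 - 2 * |x|) * (exp (2 * |x|) / 2 * (exp (-x) - 1) ^ 2) := by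
          gcongr; exact phi_le_exp_mul_sq x
      _ = (1 - 2 * |x|) * exp (2 * |x|) * (exp (-x) - 1) ^ 2 := by ring
      _ ≤ 1 * (exp (-x) - 1) ^ 2 := by gcongr
      _ = _ := one_mul _

/-- `A_j = σ_j N(x_{j+1} - x_j)`, so that system (P) with nonlinearity `N` reads
`ξᵢ' = A_{i-1} - A_i`; (P) itself is `N x = e^{-x} - 1`. -/
noncomputable def flux (k : ℕ) (N : ℝ → ℝ) (x : ℕ → ℝ) (j : ℕ) : ℝ :=
  sig k j * N (x (j + 1) - x j)

def SolvesWith (k : ℕ) (N : ℝ → ℝ) (ξ : ℕ → ℝ → ℝ) (S : Set ℝ) : Prop :=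
  ∀ i ∈ Icc 1 k, ∀ τ ∈ S, HasDerivAt (ξ i) (flux k N (ξ · τ) (i - 1) - flux k N (ξ · τ) i) τ

@[simp] lemma flux_zero (k : ℕ) (N : ℝ → ℝ) (x : ℕ → ℝ) : flux k N x 0 = 0 := by
  simp [flux, sig_zero]

@[simp] lemma flux_self (k : ℕ) (N : ℝ → ℝ) (x : ℕ → ℝ) : flux k N x k = 0 := by
  simp [flux, sig_self]

lemma flux_congr {k : ℕ} {N N' : ℝ → ℝ} {x : ℕ → ℝ}
    (h : ∀ j ∈ Ioo 0 k, N (x (j + 1) - x j) = N' (x (j + 1) - x j)) {j : ℕ} (hj : j ≤ k) :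
    flux k N x j = flux k N' x j := by
  rcases Nat.eq_zero_or_pos j with rfl | hj₀
  · simp
  rcases hj.eq_or_lt with rfl | hjk
  · simp
  rw [flux, flux, h j (mem_Ioo.2 ⟨hj₀, hjk⟩)]

lemma solvesP_iff_solvesWith {k : ℕ} {ξ : ℕ → ℝ → ℝ} {S : Set ℝ} :
    SolvesP k ξ S ↔ SolvesWith k (fun x => exp (-x) - 1) ξ S := by
  refine forall_congr' fun i => ?_
  simp only [mem_Icc, and_imp]
  refine forall₂_congr fun h₁ _ => ?_
  simp only [flux, Nat.sub_add_cancel h₁]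

namespace SolvesWith

variable {k : ℕ} {N : ℝ → ℝ} {ξ : ℕ → ℝ → ℝ}

lemma mono {S T : Set ℝ} (h : SolvesWith k N ξ S) (hTS : T ⊆ S) : SolvesWith k N ξ T :=
  fun i hi τ hτ => h i hi τ (hTS hτ)

lemma sum_eq (h : SolvesWith k N ξ (Set.Ici 0)) {τ : ℝ} (hτ : 0 ≤ τ) :
    ∑ i ∈ Icc 1 k, ξ i τ = ∑ i ∈ Icc 1 k, ξ i 0 := by
  have hderiv : ∀ σ ∈ Set.Ici (0 : ℝ), HasDerivAt (fun σ => ∑ i ∈ Icc 1 k, ξ i σ) 0 σ := by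
    intro σ hσ
    have hsum := sum_Icc_mul_sub_eq (flux k N (ξ · σ)) (fun _ => 1) k
    simp only [one_mul, sub_self, mul_zero, sum_const_zero, flux_zero, flux_self, zero_add]
      at hsum
    exact hsum ▸ HasDerivAt.fun_sum fun i hi => h i hi σ hσ
  have h₁ := antitoneOn_Ici_of_hasDerivAt (fun σ hσ => ⟨0, hderiv σ hσ, le_rfl⟩)
    Set.self_mem_Ici hτ hτ
  have h₂ := antitoneOn_Ici_of_hasDerivAt (fun σ hσ => ⟨_, (hderiv σ hσ).neg, neg_zero.le⟩)
    Set.self_mem_Ici hτ hτ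
  simp only [Pi.neg_apply, neg_le_neg_iff] at h₂
  exact le_antisymm h₁ h₂

lemma sum_sq_le (h : SolvesWith k N ξ (Set.Ici 0)) (hN : ∀ x, N x * x ≤ 0) {τ : ℝ}
    (hτ : 0 ≤ τ) : ∑ i ∈ Icc 1 k, ξ i τ ^ 2 ≤ ∑ i ∈ Icc 1 k, ξ i 0 ^ 2 := by
  refine antitoneOn_Ici_of_hasDerivAt (fun σ hσ => ⟨_, HasDerivAt.fun_sum fun i hi =>
    (h i hi σ hσ).pow 2, ?_⟩) Set.self_mem_Ici hτ hτ
  have hparts := sum_Icc_mul_sub_eq (flux k N (ξ · σ)) (ξ · σ) k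
  simp only [flux_zero, flux_self, zero_mul, add_zero, sub_zero] at hparts
  have hnonpos : ∑ j ∈ range k, flux k N (ξ · σ) j * (ξ (j + 1) σ - ξ j σ) ≤ 0 :=
    sum_nonpos fun j hj => by
      rw [flux, mul_assoc]
      exact mul_nonpos_of_nonneg_of_nonpos (sig_nonneg (mem_range.1 hj).le) (hN _)
  calc ∑ i ∈ Icc 1 k, (↑2 * ξ i σ ^ (2 - 1) * (flux k N (ξ · σ) (i - 1) - flux k N (ξ · σ) i))
      = 2 * ∑ i ∈ Icc 1 k, ξ i σ * (flux k N (ξ · σ) (i - 1) - flux k N (ξ · σ) i) := by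
        rw [mul_sum]; refine sum_congr rfl fun i _ => ?_; ring
    _ ≤ 0 := by rw [hparts]; linarith

end SolvesWith

noncomputable def energy (k : ℕ) (x : ℕ → ℝ) : ℝ :=
  ∑ j ∈ Ioo 0 k, sig k j * phi (x (j + 1) - x j)

noncomputable def dissipation (k : ℕ) (x : ℕ → ℝ) : ℝ :=
  ∑ j ∈ Ioo 0 k, sig k j * (exp (-(x (j + 1) - x j)) - 1) ^ 2

section energy

variable {k : ℕ} {x : ℕ → ℝ}

lemma sig_nonneg_of_mem_Ioo {j : ℕ} (hj : j ∈ Ioo 0 k) : 0 ≤ sig k j :=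
  sig_nonneg (mem_Ioo.1 hj).2.le

lemma energy_nonneg : 0 ≤ energy k x :=
  sum_nonneg fun _ hj => mul_nonneg (sig_nonneg_of_mem_Ioo hj) (phi_nonneg _)

lemma dissipation_nonneg : 0 ≤ dissipation k x :=
  sum_nonneg fun _ hj => mul_nonneg (sig_nonneg_of_mem_Ioo hj) (sq_nonneg _)

lemma phi_le_two_mul_energy {j : ℕ} (hj : j ∈ Ioo 0 k) :
    phi (x (j + 1) - x j) ≤ 2 * energy k x := by
  have hterm : sig k j * phi (x (j + 1) - x j) ≤ energy k x :=
    single_le_sum (f := fun j => sig k j * phi (x (j + 1) - x j))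
      (fun _ hi => mul_nonneg (sig_nonneg_of_mem_Ioo hi) (phi_nonneg _)) hj
  nlinarith [one_half_le_sig hj, phi_nonneg (x (j + 1) - x j)]

lemma abs_sub_le_one_add_two_mul_energy {j : ℕ} (hj : j ∈ Ioo 0 k) :
    |x (j + 1) - x j| ≤ 1 + 2 * energy k x := by
  linarith [phi_le_two_mul_energy (x := x) hj, abs_sub_one_le_phi (x (j + 1) - x j)]

lemma sq_sub_le_exp_mul_energy {j : ℕ} (hj : j ∈ Ioo 0 k) {B : ℝ} (hB : |x (j + 1) - x j| ≤ B) :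
    (x (j + 1) - x j) ^ 2 ≤ 4 * exp B * energy k x := by
  set d := x (j + 1) - x j
  calc d ^ 2 = 2 * exp B * (exp (-B) * d ^ 2 / 2) := by
        rw [show 2 * exp B * (exp (-B) * d ^ 2 / 2) = exp B * exp (-B) * d ^ 2 by ring,
          ← exp_add, add_neg_cancel, exp_zero, one_mul]
    _ ≤ 2 * exp B * (exp (-|d|) * d ^ 2 / 2) := by gcongr
    _ ≤ 2 * exp B * phi d := by gcongr; exact exp_neg_abs_mul_sq_le_phi d
    _ ≤ 2 * exp B * (2 * energy k x) := by gcongr; exact phi_le_two_mul_energy hj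
    _ = 4 * exp B * energy k x := by ring

lemma abs_sub_le_sqrt_mul_exp {j : ℕ} (hj : j ∈ Ioo 0 k) {B c t : ℝ}
    (hB : |x (j + 1) - x j| ≤ B) (hE : energy k x ≤ c * exp (-(2 * t))) :
    |x (j + 1) - x j| ≤ √(4 * exp B * c) * exp (-t) := by
  have hc : 0 ≤ c := nonneg_of_mul_nonneg_left (energy_nonneg.trans hE) (exp_pos _)
  refine abs_le_of_sq_le_sq ?_ (by positivity)
  calc (x (j + 1) - x j) ^ 2 ≤ 4 * exp B * energy k x := sq_sub_le_exp_mul_energy hj hB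
    _ ≤ 4 * exp B * (c * exp (-(2 * t))) := by gcongr
    _ = (√(4 * exp B * c) * exp (-t)) ^ 2 := by
        rw [mul_pow, Real.sq_sqrt (by positivity), ← exp_nat_mul, Nat.cast_ofNat, mul_neg]; ring

lemma mul_energy_le_dissipation {c : ℝ}
    (h : ∀ j ∈ Ioo 0 k, c * phi (x (j + 1) - x j) ≤ (exp (-(x (j + 1) - x j)) - 1) ^ 2) :
    c * energy k x ≤ dissipation k x := by
  rw [energy, mul_sum]
  refine sum_le_sum fun j hj => ?_
  rw [mul_left_comm]
  exact mul_le_mul_of_nonneg_left (h j hj) (sig_nonneg_of_mem_Ioo hj)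

lemma energy_le_of_abs_le {C : ℝ} (hC : 0 ≤ C) (h : ∀ i ∈ Icc 1 k, |x i| ≤ C) :
    energy k x ≤ (k : ℝ) ^ 3 * (exp (2 * C) + 2 * C) := by
  have hterm (j : ℕ) (hj : j ∈ Ioo 0 k) :
      sig k j * phi (x (j + 1) - x j) ≤ (k : ℝ) ^ 2 * (exp (2 * C) + 2 * C) := by
    obtain ⟨hj₀, hjk⟩ := mem_Ioo.1 hj
    have hd : |x (j + 1) - x j| ≤ 2 * C := by
      have := h j (mem_Icc.2 ⟨hj₀, hjk.le⟩)
      have := h (j + 1) (mem_Icc.2 ⟨by omega, hjk⟩)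
      linarith [abs_sub (x (j + 1)) (x j)]
    have hphi : phi (x (j + 1) - x j) ≤ exp (2 * C) + 2 * C :=
      (phi_le_exp_abs_add_abs _).trans (by gcongr)
    exact mul_le_mul (sig_le_sq hjk.le) hphi (phi_nonneg _) (sq_nonneg _)
  have hcard : ((Ioo 0 k).card : ℝ) ≤ k := by rw [Nat.card_Ioo]; exact_mod_cast (by omega)
  calc energy k x ≤ ∑ _j ∈ Ioo 0 k, (k : ℝ) ^ 2 * (exp (2 * C) + 2 * C) := sum_le_sum hterm
    _ = (Ioo 0 k).card * ((k : ℝ) ^ 2 * (exp (2 * C) + 2 * C)) := by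
        rw [sum_const, nsmul_eq_mul]
    _ ≤ k * ((k : ℝ) ^ 2 * (exp (2 * C) + 2 * C)) := by
        gcongr
    _ = _ := by ring

lemma abs_sub_le_of_abs_sub_succ_le {δ : ℝ} (hδ : 0 ≤ δ)
    (hd : ∀ j ∈ Ioo 0 k, |x (j + 1) - x j| ≤ δ) {a b : ℕ} (ha : a ∈ Icc 1 k) (hb : b ∈ Icc 1 k) :
    |x a - x b| ≤ k * δ := by
  wlog hab : a ≤ b generalizing a b
  · rw [abs_sub_comm]; exact this hb ha (le_of_not_ge hab)
  rw [mem_Icc] at ha hb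
  have hsum : ∑ j ∈ Ico a b, dist (x j) (x (j + 1)) ≤ (Ico a b).card • δ :=
    sum_le_card_nsmul _ _ _ fun j hj => by
      rw [Real.dist_eq, abs_sub_comm]
      exact hd j (by simp only [mem_Ico] at hj; simp only [mem_Ioo]; omega)
  rw [nsmul_eq_mul, Nat.card_Ico] at hsum
  calc |x a - x b| = dist (x a) (x b) := (Real.dist_eq _ _).symm
    _ ≤ ((b - a : ℕ) : ℝ) * δ := (dist_le_Ico_sum_dist x hab).trans hsum
    _ ≤ k * δ := by gcongr; omega

lemma abs_le_of_sum_eq_zero {δ : ℝ} (hδ : 0 ≤ δ) (hsum : ∑ i ∈ Icc 1 k, x i = 0)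
    (hd : ∀ j ∈ Ioo 0 k, |x (j + 1) - x j| ≤ δ) {i : ℕ} (hi : i ∈ Icc 1 k) :
    |x i| ≤ k * δ := by
  have hk : (0 : ℝ) < k := by
    have := (mem_Icc.1 hi); exact_mod_cast (by omega : 0 < k)
  have hcard : ((Icc 1 k).card : ℝ) = k := by simp
  have hmean : (k : ℝ) * x i = ∑ l ∈ Icc 1 k, (x i - x l) := by
    rw [sum_sub_distrib, hsum, sum_const, nsmul_eq_mul, hcard, sub_zero]
  refine le_of_mul_le_mul_left ?_ hk
  calc (k : ℝ) * |x i| = |∑ l ∈ Icc 1 k, (x i - x l)| := by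
        rw [← hmean, abs_mul, abs_of_pos hk]
    _ ≤ ∑ l ∈ Icc 1 k, |x i - x l| := abs_sum_le_sum_abs _ _
    _ ≤ ∑ _l ∈ Icc 1 k, (k : ℝ) * δ :=
        sum_le_sum fun l hl => abs_sub_le_of_abs_sub_succ_le hδ hd hi hl
    _ = k * (k * δ) := by rw [sum_const, nsmul_eq_mul, hcard]

end energy

section decay

variable {k : ℕ} {ξ : ℕ → ℝ → ℝ}

lemma hasDerivAt_energy {S : Set ℝ} (h : SolvesP k ξ S) {τ : ℝ} (hτ : τ ∈ S) :
    ∃ e, HasDerivAt (fun τ => energy k (ξ · τ)) e τ ∧ e ≤ -dissipation k (ξ · τ) := by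
  rw [solvesP_iff_solvesWith] at h
  set u : ℕ → ℝ := fun j => exp (-(ξ (j + 1) τ - ξ j τ)) - 1 with hu
  have hflux (j : ℕ) : flux k (fun x => exp (-x) - 1) (ξ · τ) j = sig k j * u j := rfl
  have hd (j : ℕ) (hj : j ∈ Ioo 0 k) : HasDerivAt (fun τ => ξ (j + 1) τ - ξ j τ)
      (2 * (sig k j * u j) - sig k (j - 1) * u (j - 1) - sig k (j + 1) * u (j + 1)) τ := by
    obtain ⟨hj₀, hjk⟩ := mem_Ioo.1 hj
    have h₁ := h (j + 1) (mem_Icc.2 ⟨by omega, hjk⟩) τ hτ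
    have h₀ := h j (mem_Icc.2 ⟨hj₀, hjk.le⟩) τ hτ
    rw [Nat.add_sub_cancel, hflux, hflux] at h₁
    rw [hflux, hflux] at h₀
    exact (h₁.sub h₀).congr_deriv (by ring)
  refine ⟨_, HasDerivAt.fun_sum fun j hj =>
    ((hasDerivAt_phi _).comp τ (hd j hj)).const_mul (sig k j), ?_⟩
  calc ∑ j ∈ Ioo 0 k, sig k j * ((1 - exp (-(ξ (j + 1) τ - ξ j τ))) *
        (2 * (sig k j * u j) - sig k (j - 1) * u (j - 1) - sig k (j + 1) * u (j + 1)))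
      = -∑ j ∈ Ioo 0 k, sig k j * u j *
        (2 * (sig k j * u j) - sig k (j - 1) * u (j - 1) - sig k (j + 1) * u (j + 1)) := by
        rw [← sum_neg_distrib]
        exact sum_congr rfl fun j _ => by rw [hu]; ring
    _ ≤ -dissipation k (ξ · τ) := neg_le_neg (sum_sig_mul_sq_le k u)

lemma energy_le_energy_zero (h : SolvesP k ξ (Set.Ici 0)) {τ : ℝ} (hτ : 0 ≤ τ) :
    energy k (ξ · τ) ≤ energy k (ξ · 0) := by
  refine antitoneOn_Ici_of_hasDerivAt (f := fun τ => energy k (ξ · τ)) (fun σ hσ => ?_)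
    Set.self_mem_Ici hτ hτ
  obtain ⟨e, he, hle⟩ := hasDerivAt_energy h hσ
  exact ⟨e, he, hle.trans (neg_nonpos.2 dissipation_nonneg)⟩

lemma energy_le_mul_exp_of_abs_sub_le (h : SolvesP k ξ (Set.Ici 0)) {B : ℝ}
    (hB : ∀ σ, 0 ≤ σ → ∀ j ∈ Ioo 0 k, |ξ (j + 1) σ - ξ j σ| ≤ B) {τ : ℝ} (hτ : 0 ≤ τ) :
    energy k (ξ · τ) ≤ energy k (ξ · 0) * exp (-(2 * exp (-(2 * B)) * τ)) := by
  set α := 2 * exp (-(2 * B))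
  have := le_mul_exp_sub_of_hasDerivAt (E := fun τ => energy k (ξ · τ)) (W := fun σ => α * σ)
    (w := fun _ => α) (fun σ hσ => ?_) (fun σ => by simpa using (hasDerivAt_id σ).const_mul α) hτ
  · simpa using this
  obtain ⟨e, he, hle⟩ := hasDerivAt_energy h hσ
  refine ⟨e, he, ?_⟩
  have := mul_energy_le_dissipation (x := (ξ · σ)) (c := α) fun j hj =>
    two_mul_exp_neg_two_mul_phi_le (hB σ hσ j hj)
  linarith

lemma energy_le_mul_exp_neg_two_mul (h : SolvesP k ξ (Set.Ici 0)) {b γ : ℝ} (hb : 0 ≤ b)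
    (hγ : 0 < γ) (hd : ∀ σ, 0 ≤ σ → ∀ j ∈ Ioo 0 k, |ξ (j + 1) σ - ξ j σ| ≤ b * exp (-(γ * σ)))
    {τ : ℝ} (hτ : 0 ≤ τ) :
    energy k (ξ · τ) ≤ energy k (ξ · 0) * exp (4 * b / γ) * exp (-(2 * τ)) := by
  have hW (σ : ℝ) : HasDerivAt (fun σ => 2 * σ + 4 * b / γ * exp (-(γ * σ)))
      (2 - 2 * (2 * (b * exp (-(γ * σ))))) σ := by
    have := ((hasDerivAt_id' σ).const_mul 2).add
      (((hasDerivAt_id' σ).const_mul γ).neg.exp.const_mul (4 * b / γ))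
    exact this.congr_deriv (by simp only [Pi.neg_apply]; field_simp; ring)
  have hE := le_mul_exp_sub_of_hasDerivAt (E := fun τ => energy k (ξ · τ)) (fun σ hσ => ?_) hW hτ
  · calc energy k (ξ · τ) ≤ energy k (ξ · 0) * exp (2 * 0 + 4 * b / γ * exp (-(γ * 0))
          - (2 * τ + 4 * b / γ * exp (-(γ * τ)))) := hE
      _ ≤ energy k (ξ · 0) * exp (4 * b / γ + -(2 * τ)) := by
          gcongr
          · exact energy_nonneg
          · simp only [mul_zero, neg_zero, exp_zero, mul_one, zero_add]
            have : 0 ≤ 4 * b / γ * exp (-(γ * τ)) := by positivity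
            linarith
      _ = _ := by rw [exp_add, mul_assoc]
  obtain ⟨e, he, hle⟩ := hasDerivAt_energy h hσ
  refine ⟨e, he, ?_⟩
  have := mul_energy_le_dissipation (x := (ξ · σ)) (c := 2 * (1 - 2 * (b * exp (-(γ * σ)))))
    fun j hj => by
      refine le_trans ?_ (two_mul_one_sub_two_abs_mul_phi_le _)
      gcongr
      · exact phi_nonneg _
      · exact hd σ hσ j hj
  linarith

end decay

theorem exists_abs_le_mul_exp_neg (k : ℕ) (E₀ : ℝ) :
    ∃ C, ∀ ξ : ℕ → ℝ → ℝ, SolvesP k ξ (Set.Ici 0) → ∑ i ∈ Icc 1 k, ξ i 0 = 0 →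
      energy k (ξ · 0) ≤ E₀ → ∀ τ, 0 ≤ τ → ∀ i ∈ Icc 1 k, |ξ i τ| ≤ C * exp (-τ) := by
  set B := 1 + 2 * E₀
  set γ := exp (-(2 * B))
  set b := √(4 * exp B * E₀)
  set D := √(4 * exp B * (E₀ * exp (4 * b / γ)))
  refine ⟨k * D, fun ξ h hsum hE₀ τ hτ i hi => ?_⟩
  have hE (σ : ℝ) (hσ : 0 ≤ σ) : energy k (ξ · σ) ≤ E₀ := (energy_le_energy_zero h hσ).trans hE₀
  have hB (σ : ℝ) (hσ : 0 ≤ σ) (j : ℕ) (hj : j ∈ Ioo 0 k) : |ξ (j + 1) σ - ξ j σ| ≤ B :=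
    (abs_sub_le_one_add_two_mul_energy (x := (ξ · σ)) hj).trans (by linarith [hE σ hσ])
  have hb (σ : ℝ) (hσ : 0 ≤ σ) (j : ℕ) (hj : j ∈ Ioo 0 k) :
      |ξ (j + 1) σ - ξ j σ| ≤ b * exp (-(γ * σ)) := by
    refine abs_sub_le_sqrt_mul_exp (x := (ξ · σ)) hj (hB σ hσ j hj) ?_
    calc energy k (ξ · σ) ≤ energy k (ξ · 0) * exp (-(2 * γ * σ)) :=
          energy_le_mul_exp_of_abs_sub_le h hB hσ
      _ ≤ E₀ * exp (-(2 * (γ * σ))) := by rw [← mul_assoc]; gcongr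
  have hd (j : ℕ) (hj : j ∈ Ioo 0 k) : |ξ (j + 1) τ - ξ j τ| ≤ D * exp (-τ) := by
    refine abs_sub_le_sqrt_mul_exp (x := (ξ · τ)) hj (hB τ hτ j hj) ?_
    calc energy k (ξ · τ) ≤ energy k (ξ · 0) * exp (4 * b / γ) * exp (-(2 * τ)) :=
          energy_le_mul_exp_neg_two_mul h (by positivity) (by positivity) hb hτ
      _ ≤ E₀ * exp (4 * b / γ) * exp (-(2 * τ)) := by gcongr
  have hsumτ : ∑ i ∈ Icc 1 k, ξ i τ = 0 :=
    ((solvesP_iff_solvesWith.1 h).sum_eq hτ).trans hsum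
  calc |ξ i τ| ≤ k * (D * exp (-τ)) := abs_le_of_sum_eq_zero (by positivity) hsumτ hd hi
    _ = k * D * exp (-τ) := by ring

noncomputable def clamp (M x : ℝ) : ℝ := max (-M) (min M x)

lemma lipschitzWith_clamp (M : ℝ) : LipschitzWith 1 (clamp M) :=
  (LipschitzWith.id.const_min M).const_max (-M)

lemma clamp_mem_Icc {M : ℝ} (hM : 0 ≤ M) (x : ℝ) : clamp M x ∈ Set.Icc (-M) M :=
  ⟨le_max_left _ _, max_le (by linarith) (min_le_left _ _)⟩

lemma clamp_of_abs_le {M x : ℝ} (h : |x| ≤ M) : clamp M x = x := by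
  rw [abs_le] at h
  rw [clamp, min_eq_right h.2, max_eq_right h.1]

lemma monotone_clamp (M : ℝ) : Monotone (clamp M) :=
  fun _ _ h => max_le_max le_rfl (min_le_min le_rfl h)

lemma exists_lipschitzWith_comp_clamp {f : ℝ → ℝ} (hf : ContDiff ℝ 1 f) {M : ℝ} (hM : 0 ≤ M) :
    ∃ K, LipschitzWith K (f ∘ clamp M) := by
  obtain ⟨K, hK⟩ := hf.contDiffOn.exists_lipschitzOnWith one_ne_zero (convex_Icc (-M) M)
    isCompact_Icc
  refine ⟨K * 1, lipschitzOnWith_univ.1 ?_⟩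
  exact hK.comp (lipschitzWith_clamp M).lipschitzOnWith fun x _ => clamp_mem_Icc hM x

lemma abs_exp_neg_clamp_sub_one_le {M : ℝ} (hM : 0 ≤ M) (x : ℝ) :
    |exp (-clamp M x) - 1| ≤ exp M + 1 := by
  have := exp_le_exp.2 (neg_le.1 (clamp_mem_Icc hM x).1)
  rw [abs_le]; constructor <;> linarith [exp_pos (-clamp M x)]

lemma apply_mul_nonpos_of_antitone {N : ℝ → ℝ} (hN : Antitone N) (h₀ : N 0 = 0) (x : ℝ) :
    N x * x ≤ 0 := by
  rcases le_total 0 x with h | h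
  · exact mul_nonpos_of_nonpos_of_nonneg (h₀ ▸ hN h) h
  · exact mul_nonpos_of_nonneg_of_nonpos (h₀ ▸ hN h) h

lemma antitone_exp_neg_clamp_sub_one (M : ℝ) : Antitone fun x => exp (-clamp M x) - 1 :=
  fun _ _ h => sub_le_sub_right (exp_le_exp.2 (neg_le_neg (monotone_clamp M h))) 1

/-- Index `i` of the padded sequence is coordinate `i - 1` of `y`; the values at indices `0`
and `k + 1` are irrelevant since `σ₀ = σ_k = 0`. -/
noncomputable def extend (k : ℕ) (y : Fin k → ℝ) (j : ℕ) : ℝ :=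
  if h : j - 1 < k then y ⟨j - 1, h⟩ else 0

lemma extend_of_mem {k i : ℕ} (y : Fin k → ℝ) (hi₁ : 1 ≤ i) (hik : i ≤ k) :
    extend k y i = y ⟨i - 1, by omega⟩ :=
  dif_pos _

lemma lipschitzWith_extend (k j : ℕ) : LipschitzWith 1 fun y => extend k y j := by
  unfold extend
  split_ifs
  exacts [LipschitzWith.eval _, LipschitzWith.const' 0]

noncomputable def vectorField (k : ℕ) (N : ℝ → ℝ) (y : Fin k → ℝ) : Fin k → ℝ :=
  fun i => flux k N (extend k y) i - flux k N (extend k y) (i + 1)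

lemma lipschitzWith_flux_extend {k : ℕ} {N : ℝ → ℝ} {K : ℝ≥0} (hN : LipschitzWith K N) (j : ℕ) :
    LipschitzWith (‖sig k j‖₊ * (K * (1 + 1))) fun y => flux k N (extend k y) j :=
  (lipschitzWith_smul (sig k j)).comp
    (hN.comp ((lipschitzWith_extend k (j + 1)).sub (lipschitzWith_extend k j)))

lemma exists_lipschitzWith_vectorField {k : ℕ} {N : ℝ → ℝ} {K : ℝ≥0} (hN : LipschitzWith K N) :
    ∃ K', LipschitzWith K' (vectorField k N) := by
  set c : Fin k → ℝ≥0 := fun i =>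
    ‖sig k i‖₊ * (K * (1 + 1)) + ‖sig k (i + 1)‖₊ * (K * (1 + 1))
  refine ⟨∑ i, c i, LipschitzWith.of_forall_eval fun i => ?_⟩
  exact ((lipschitzWith_flux_extend hN i).sub (lipschitzWith_flux_extend hN (i + 1))).weaken
    (single_le_sum (f := c) (fun _ _ => bot_le) (mem_univ i))

lemma abs_flux_le {k : ℕ} {N : ℝ → ℝ} {C : ℝ} (hC : ∀ x, |N x| ≤ C) (x : ℕ → ℝ) {j : ℕ}
    (hj : j ≤ k) : |flux k N x j| ≤ (k : ℝ) ^ 2 * C := by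
  rw [flux, abs_mul, abs_of_nonneg (sig_nonneg hj)]
  exact mul_le_mul (sig_le_sq hj) (hC _) (abs_nonneg _) (sq_nonneg _)

lemma norm_vectorField_le {k : ℕ} {N : ℝ → ℝ} {C : ℝ} (hC : ∀ x, |N x| ≤ C) (y : Fin k → ℝ) :
    ‖vectorField k N y‖ ≤ 2 * (k : ℝ) ^ 2 * C := by
  have hC₀ : 0 ≤ C := (abs_nonneg _).trans (hC 0)
  refine (pi_norm_le_iff_of_nonneg (by positivity)).2 fun i => ?_
  rw [Real.norm_eq_abs, vectorField]
  have h₁ := abs_flux_le hC (extend k y) i.2.le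
  have h₂ := abs_flux_le hC (extend k y) (j := i + 1) i.2
  calc _ ≤ |flux k N (extend k y) i| + |flux k N (extend k y) (i + 1)| := abs_sub _ _
    _ ≤ 2 * (k : ℝ) ^ 2 * C := by linarith

lemma exists_solvesWith {k : ℕ} {N : ℝ → ℝ} {K : ℝ≥0} {C : ℝ} (hN : LipschitzWith K N)
    (hC : ∀ x, |N x| ≤ C) (x₀ : ℕ → ℝ) :
    ∃ ξ : ℕ → ℝ → ℝ, (∀ i ∈ Icc 1 k, ξ i 0 = x₀ i) ∧ SolvesWith k N ξ Set.univ := by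
  obtain ⟨K', hK'⟩ := exists_lipschitzWith_vectorField (k := k) hN
  obtain ⟨g, hg₀, hg⟩ := exists_hasDerivAt_of_lipschitzWith hK' (norm_vectorField_le hC)
    fun i => x₀ (i + 1)
  refine ⟨fun i t => extend k (g t) i, fun i hi => ?_, fun i hi t _ => ?_⟩ <;>
    obtain ⟨hi₁, hik⟩ := mem_Icc.1 hi
  · simp only [extend_of_mem _ hi₁ hik, hg₀, Nat.sub_add_cancel hi₁]
  · have hcoord : (fun t => g t ⟨i - 1, by omega⟩) = fun t => extend k (g t) i :=
      funext fun t => (extend_of_mem _ hi₁ hik).symm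
    have := hasDerivAt_pi.1 (hg t) ⟨i - 1, by omega⟩
    rw [hcoord] at this
    simpa only [vectorField, Nat.sub_add_cancel hi₁] using this

theorem exists_solvesP (k : ℕ) (x₀ : ℕ → ℝ) :
    ∃ ξ : ℕ → ℝ → ℝ, (∀ i ∈ Icc 1 k, ξ i 0 = x₀ i) ∧ SolvesP k ξ (Set.Ici 0) := by
  set R := √(∑ i ∈ Icc 1 k, x₀ i ^ 2)
  have hM : 0 ≤ 2 * R := by positivity
  obtain ⟨K, hK⟩ := exists_lipschitzWith_comp_clamp (f := fun x => exp (-x) - 1) (by fun_prop) hM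
  obtain ⟨ξ, hξ₀, hξ⟩ := exists_solvesWith (k := k) hK (abs_exp_neg_clamp_sub_one_le hM) x₀
  have hsign := apply_mul_nonpos_of_antitone (antitone_exp_neg_clamp_sub_one (2 * R))
    (by simp [clamp_of_abs_le (show |(0 : ℝ)| ≤ 2 * R by simpa using hM)])
  have hR (τ : ℝ) (hτ : 0 ≤ τ) (i : ℕ) (hi : i ∈ Icc 1 k) : |ξ i τ| ≤ R := by
    refine Real.abs_le_sqrt ?_
    calc ξ i τ ^ 2 ≤ ∑ l ∈ Icc 1 k, ξ l τ ^ 2 :=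
          single_le_sum (f := fun l => ξ l τ ^ 2) (fun _ _ => sq_nonneg _) hi
      _ ≤ ∑ l ∈ Icc 1 k, ξ l 0 ^ 2 := (hξ.mono (Set.subset_univ _)).sum_sq_le hsign hτ
      _ = ∑ l ∈ Icc 1 k, x₀ l ^ 2 := sum_congr rfl fun l hl => by rw [hξ₀ l hl]
  refine ⟨ξ, hξ₀, solvesP_iff_solvesWith.2 fun i hi τ hτ => ?_⟩
  have hclamp (j : ℕ) (hj : j ∈ Ioo 0 k) : exp (-clamp (2 * R) (ξ (j + 1) τ - ξ j τ)) - 1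
      = exp (-(ξ (j + 1) τ - ξ j τ)) - 1 := by
    obtain ⟨hj₀, hjk⟩ := mem_Ioo.1 hj
    have h₁ := hR τ hτ (j + 1) (mem_Icc.2 ⟨by omega, hjk⟩)
    have h₀ := hR τ hτ j (mem_Icc.2 ⟨hj₀, hjk.le⟩)
    rw [clamp_of_abs_le ((abs_sub _ _).trans (by linarith))]
  obtain ⟨hi₁, hik⟩ := mem_Icc.1 hi
  set N := (fun x => exp (-x) - 1) ∘ clamp (2 * R)
  rw [← flux_congr (N := N) hclamp (by omega : i - 1 ≤ k), ← flux_congr (N := N) hclamp hik]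
  exact hξ i hi τ trivial

end SystemP

theorem stmt9_general (k : ℕ) (C₀ : ℝ) (hC₀ : 0 < C₀) :
    ∃ C₁ > 0, ∀ ξ₀ : ℕ → ℝ,
      (∑ i ∈ Finset.Icc 1 k, ξ₀ i = 0) →
      (∀ i, 1 ≤ i → i ≤ k → |ξ₀ i| ≤ C₀) →
      (∃ ξ : ℕ → ℝ → ℝ, (∀ i, 1 ≤ i → i ≤ k → ξ i 0 = ξ₀ i) ∧
        SolvesP k ξ (Set.Ici 0)) ∧
      (∀ ξ : ℕ → ℝ → ℝ, (∀ i, 1 ≤ i → i ≤ k → ξ i 0 = ξ₀ i) →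
        SolvesP k ξ (Set.Ici 0) →
        ∀ τ, 0 ≤ τ → ∀ i, 1 ≤ i → i ≤ k → |ξ i τ| ≤ C₁ * Real.exp (-τ)) := by
  obtain ⟨C, hC⟩ :=
    SystemP.exists_abs_le_mul_exp_neg k ((k : ℝ) ^ 3 * (exp (2 * C₀) + 2 * C₀))
  refine ⟨max C 1, by positivity, fun ξ₀ hsum hbound => ⟨?_, fun ξ hξ₀ h τ hτ i hi₁ hik => ?_⟩⟩
  · obtain ⟨ξ, hξ, h⟩ := SystemP.exists_solvesP k ξ₀
    exact ⟨ξ, fun i hi₁ hik => hξ i (mem_Icc.2 ⟨hi₁, hik⟩), h⟩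
  have hinit (i : ℕ) (hi : i ∈ Icc 1 k) : ξ i 0 = ξ₀ i := hξ₀ i (mem_Icc.1 hi).1 (mem_Icc.1 hi).2
  have hE₀ := SystemP.energy_le_of_abs_le (x := (ξ · 0)) hC₀.le fun i hi =>
    hinit i hi ▸ hbound i (mem_Icc.1 hi).1 (mem_Icc.1 hi).2
  calc |ξ i τ| ≤ C * exp (-τ) :=
        hC ξ h ((sum_congr rfl hinit).trans hsum) hE₀ τ hτ i (mem_Icc.2 ⟨hi₁, hik⟩)
    _ ≤ max C 1 * exp (-τ) := by gcongr; exact le_max_left _ _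

/-- there is `C₁ > 0` depending only on `k` and `C₀` such that for any
initial data at `τ = 0` with zero sum and components bounded by `C₀`, the (maximal)
solution of system (P) is defined on all of `[0,∞)` (a global solution with this data
exists) and satisfies `max_{1≤i≤k} |ξᵢ(τ)| ≤ C₁ e^{-τ}` for all `τ ≥ 0`. -/
theorem stmt9 (k : ℕ) (hk : 2 ≤ k) (C₀ : ℝ) (hC₀ : 0 < C₀) :
    ∃ C₁ > 0, ∀ ξ₀ : ℕ → ℝ,
      (∑ i ∈ Finset.Icc 1 k, ξ₀ i = 0) →
      (∀ i, 1 ≤ i → i ≤ k → |ξ₀ i| ≤ C₀) →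
      (∃ ξ : ℕ → ℝ → ℝ, (∀ i, 1 ≤ i → i ≤ k → ξ i 0 = ξ₀ i) ∧
        SolvesP k ξ (Set.Ici 0)) ∧
      (∀ ξ : ℕ → ℝ → ℝ, (∀ i, 1 ≤ i → i ≤ k → ξ i 0 = ξ₀ i) →
        SolvesP k ξ (Set.Ici 0) →
        ∀ τ, 0 ≤ τ → ∀ i, 1 ≤ i → i ≤ k → |ξ i τ| ≤ C₁ * Real.exp (-τ)) :=
  stmt9_general k C₀ hC₀
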